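/- If G is a connected, coherent, non-bipartite matrix-weighted network, the random walk iteration y(t+1)ᵀ = y(t)ᵀ𝒫 converges to the steady state y_j*ᵀ = ȳ(0)ᵀ S_{1σ(j)} d_j/(2m), where ȳ(0)ᵀ = Σ_i y_i(0)ᵀ S_{σ(i)1} and 2m = Σ_j d_j. -/

import Mathlib

/-!
Coherence turns the edge transformations into a gauge: with `T i j := S (σ i) (σ j)` one has
`R i j = T i j` on every edge and `T i j * T j k = T i k`, so the `t`-th power of `𝒫` has
`(i, j)`-block `(Pᵗ)ᵢⱼ • T i j`, where `P = D⁻¹W` is the scalar random walk. It remains to show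
`(Pᵗ)ᵢⱼ → d_j / 2m`. Now `P` is similar to the symmetric matrix `N = D^{-1/2} W D^{-1/2}`. A maximum
principle for the row-stochastic `P` shows that its eigenvalues lie in `[-1, 1]`, that the
eigenvalue `1` has only constant eigenvectors (connectivity) and that `-1` is not an eigenvalue
(non-bipartiteness). By the spectral theorem `Nᵗ` then converges to the orthogonal projection
onto `√d`, which is the claimed limit.
-/

open Matrix Kronecker Filter

variable {n nd m : ℕ}

/-- Supra-weight matrix: block matrix with (i,j)-block `W i j`. -/
def supra (W : Fin n → Fin n → Matrix (Fin nd) (Fin nd) ℝ) :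
    Matrix (Fin n × Fin nd) (Fin n × Fin nd) ℝ :=
  fun p q => W p.1 q.1 p.2 q.2

/-- Supra-Laplacian `ℒ = (D ⊗ I) − 𝒲`, built from edge magnitudes `w` and
edge transformations `R` (so `W i j = w i j • R i j`). -/
noncomputable def supraLap (w : Fin n → Fin n → ℝ)
    (R : Fin n → Fin n → Matrix (Fin nd) (Fin nd) ℝ) :
    Matrix (Fin n × Fin nd) (Fin n × Fin nd) ℝ :=
  (Matrix.diagonal (fun i => ∑ j, w i j)) ⊗ₖ (1 : Matrix (Fin nd) (Fin nd) ℝ)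
    - supra (fun i j => w i j • R i j)

/-- Supra-transition matrix `𝒫 = 𝒟⁻¹𝒲`. -/
noncomputable def supraP (w : Fin n → Fin n → ℝ)
    (R : Fin n → Fin n → Matrix (Fin nd) (Fin nd) ℝ) :
    Matrix (Fin n × Fin nd) (Fin n × Fin nd) ℝ :=
  fun p q => w p.1 q.1 * R p.1 q.1 p.2 q.2 / (∑ k, w p.1 k)

/-- Transformation of a directed path, given as its list of visited nodes:
the ordered product of the edge transformations. -/
def pathTransform (R : Fin n → Fin n → Matrix (Fin nd) (Fin nd) ℝ) :
    List (Fin n) → Matrix (Fin nd) (Fin nd) ℝ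
  | [] => 1
  | [_] => 1
  | i :: j :: rest => R i j * pathTransform R (j :: rest)

/-- `p` is a directed path from `i` to `j` along edges of the relation `E`. -/
def IsPathFrom (E : Fin n → Fin n → Prop) (i j : Fin n) (p : List (Fin n)) : Prop :=
  p.Chain' E ∧ p.head? = some i ∧ p.getLast? = some j

/-- Coherence: the transformation of every directed cycle is the identity. -/
def Coherent (E : Fin n → Fin n → Prop)
    (R : Fin n → Fin n → Matrix (Fin nd) (Fin nd) ℝ) : Prop :=
  ∀ i (p : List (Fin n)), IsPathFrom E i i p → pathTransform R p = 1

/-- Connectivity: any two nodes are joined by a directed path. -/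
def Connected (E : Fin n → Fin n → Prop) : Prop :=
  ∀ i j, ∃ p, IsPathFrom E i j p

/-- The block-diagonal matrix `𝒮` whose `i`-th diagonal block is `S b0 (σ i)`. -/
def blockS (σ : Fin n → Fin m) (S : Fin m → Fin m → Matrix (Fin nd) (Fin nd) ℝ)
    (b0 : Fin m) : Matrix (Fin n × Fin nd) (Fin n × Fin nd) ℝ :=
  fun p q => if p.1 = q.1 then S b0 (σ p.1) p.2 q.2 else 0

open Finset Topology

theorem IsPathFrom.reflTransGen {E : Fin n → Fin n → Prop} {i j : Fin n} {p : List (Fin n)}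
    (h : IsPathFrom E i j p) : Relation.ReflTransGen E i j := by
  obtain ⟨hp, hi, hj⟩ := h
  have hne : p ≠ [] := by rintro rfl; simp at hi
  rw [List.head?_eq_some_head hne, Option.some_inj] at hi
  rw [List.getLast?_eq_some_getLast hne, Option.some_inj] at hj
  exact hi ▸ hj ▸ List.relationReflTransGen_of_exists_isChain p hp hne

theorem Connected.reflTransGen {E : Fin n → Fin n → Prop} (h : Connected E) (i j : Fin n) :
    Relation.ReflTransGen E i j :=
  (h i j).choose_spec.reflTransGen

theorem Connected.forall_of_adj_imp {E : Fin n → Fin n → Prop} (hE : Connected E)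
    {Q : Fin n → Prop} (hQ : ∀ a b, E a b → Q a → Q b) {i : Fin n} (hi : Q i) (j : Fin n) :
    Q j := by
  induction hE.reflTransGen i j with
  | refl => exact hi
  | tail _ hbc ih => exact hQ _ _ hbc ih

theorem IsPathFrom.cons {E : Fin n → Fin n → Prop} {i j k : Fin n} {p : List (Fin n)}
    (hij : E i j) (hp : IsPathFrom E j k p) : IsPathFrom E i k (i :: p) := by
  obtain ⟨hc, hj, hk⟩ := hp
  obtain _ | ⟨j', p⟩ := p
  · simp at hj
  obtain rfl : j' = j := by simpa using hj
  exact ⟨List.IsChain.cons_cons hij hc, rfl, by simpa using hk⟩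

theorem pathTransform_cons (R : Fin n → Fin n → Matrix (Fin nd) (Fin nd) ℝ) {i j : Fin n}
    {p : List (Fin n)} (hp : p.head? = some j) :
    pathTransform R (i :: p) = R i j * pathTransform R p := by
  obtain _ | ⟨j', p⟩ := p
  · simp at hp
  obtain rfl : j' = j := by simpa using hp
  rfl

/-- The paper's `S_{σ(i)σ(j)}`: the transformation shared by all paths from `i` to `j`. -/
def IsPathTransform (E : Fin n → Fin n → Prop)
    (R T : Fin n → Fin n → Matrix (Fin nd) (Fin nd) ℝ) : Prop :=
  ∀ i j p, IsPathFrom E i j p → T i j = pathTransform R p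

namespace IsPathTransform

variable {E : Fin n → Fin n → Prop} {R T : Fin n → Fin n → Matrix (Fin nd) (Fin nd) ℝ}

theorem apply_self (hT : IsPathTransform E R T) (i : Fin n) : T i i = 1 :=
  hT i i [i] ⟨List.isChain_singleton i, rfl, rfl⟩

theorem apply_of_adj (hT : IsPathTransform E R T) {i j : Fin n} (hij : E i j) : T i j = R i j :=
  (hT i j [i, j] ⟨List.isChain_pair.2 hij, rfl, rfl⟩).trans (mul_one _)

theorem adj_mul (hT : IsPathTransform E R T) (hE : Connected E) {i j : Fin n} (hij : E i j)
    (k : Fin n) : R i j * T j k = T i k := by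
  obtain ⟨p, hp⟩ := hE j k
  rw [hT j k p hp, hT i k _ (hp.cons hij), pathTransform_cons R hp.2.1]

theorem apply_mul_apply (hT : IsPathTransform E R T) (hE : Connected E) (i j k : Fin n) :
    T i j * T j k = T i k := by
  induction hE.reflTransGen i j using Relation.ReflTransGen.head_induction_on with
  | refl => rw [hT.apply_self, one_mul]
  | head hab _ ih => rw [← hT.adj_mul hE hab, mul_assoc, ih, hT.adj_mul hE hab]

end IsPathTransform

noncomputable def transitionMatrix (w : Fin n → Fin n → ℝ) : Matrix (Fin n) (Fin n) ℝ :=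
  Matrix.of fun a b => w a b / ∑ k, w a k

theorem supra_smul_pow {A : Matrix (Fin n) (Fin n) ℝ}
    {T : Fin n → Fin n → Matrix (Fin nd) (Fin nd) ℝ}
    (h_one : ∀ i, T i i = 1) (h_mul : ∀ i j k, T i j * T j k = T i k) (t : ℕ) :
    supra (fun i j => A i j • T i j) ^ t = supra (fun i j => (A ^ t) i j • T i j) := by
  induction t with
  | zero =>
    ext ⟨i, a⟩ ⟨j, b⟩
    by_cases hij : i = j
    · subst hij; simp [supra, h_one, Matrix.one_apply]
    · simp [supra, hij]
  | succ t ih =>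
    ext ⟨i, a⟩ ⟨j, b⟩
    simp only [pow_succ, ih, Matrix.mul_apply, supra, Matrix.smul_apply, smul_eq_mul,
      Fintype.sum_prod_type, Finset.sum_mul]
    refine Finset.sum_congr rfl fun k _ => ?_
    rw [← h_mul i k j, Matrix.mul_apply, Finset.mul_sum]
    exact Finset.sum_congr rfl fun c _ => by ring

theorem supraP_eq_supra {w : Fin n → Fin n → ℝ} {R T : Fin n → Fin n → Matrix (Fin nd) (Fin nd) ℝ}
    (hT : IsPathTransform (fun i j => w i j ≠ 0) R T) :
    supraP w R = supra fun i j => transitionMatrix w i j • T i j := by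
  ext ⟨i, a⟩ ⟨j, b⟩
  by_cases hij : w i j = 0
  · simp [supraP, supra, transitionMatrix, hij]
  · simp [supraP, supra, transitionMatrix, hT.apply_of_adj hij]
    ring

theorem vecMul_supra_smul_apply (y : Fin n × Fin nd → ℝ) (A : Matrix (Fin n) (Fin n) ℝ)
    (T : Fin n → Fin n → Matrix (Fin nd) (Fin nd) ℝ) (j : Fin n) (b : Fin nd) :
    (y ᵥ* supra fun i j => A i j • T i j) (j, b) =
      ∑ i, A i j * ((fun c => y (i, c)) ᵥ* T i j) b := by
  simp only [vecMul, dotProduct, supra, Fintype.sum_prod_type, Matrix.smul_apply, smul_eq_mul,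
    Finset.mul_sum, mul_left_comm]

section RowStochastic

variable {ι : Type*} [Fintype ι] [DecidableEq ι] {P : Matrix ι ι ℝ}

theorem eq_of_mulVec_apply_eq_of_forall_le (hP : P ∈ rowStochastic ℝ ι) {z : ι → ℝ} {M : ℝ}
    (hz : ∀ b, z b ≤ M) {a : ι} (ha : (P *ᵥ z) a = M) {b : ι} (hab : P a b ≠ 0) : z b = M := by
  have hsum : ∑ c, P a c * (M - z c) = 0 := by
    simp only [mul_sub, sum_sub_distrib, ← sum_mul, sum_row_of_mem_rowStochastic hP, one_mul]
    exact sub_eq_zero.2 ha.symm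
  have := (sum_eq_zero_iff_of_nonneg fun c _ =>
    mul_nonneg (nonneg_of_mem_rowStochastic hP) (sub_nonneg.2 (hz c))).1 hsum b (mem_univ b)
  linarith [(mul_eq_zero.1 this).resolve_left hab]

theorem abs_le_one_of_mulVec_eq_smul (hP : P ∈ rowStochastic ℝ ι) {y : ι → ℝ} (hy : y ≠ 0)
    {μ : ℝ} (h : P *ᵥ y = μ • y) : |μ| ≤ 1 := by
  obtain ⟨b, hb⟩ := Function.ne_iff.1 hy
  have : Nonempty ι := ⟨b⟩
  obtain ⟨a, ha⟩ := Finite.exists_max fun b => |y b|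
  have hpos : 0 < |y a| := (abs_pos.2 hb).trans_le (ha b)
  refine le_of_mul_le_mul_right ?_ hpos
  calc |μ| * |y a| = |(P *ᵥ y) a| := by rw [h, Pi.smul_apply, smul_eq_mul, abs_mul]
    _ ≤ ∑ b, P a b * |y b| := by
      refine (abs_sum_le_sum_abs _ _).trans_eq (sum_congr rfl fun b _ => ?_)
      rw [abs_mul, abs_of_nonneg (nonneg_of_mem_rowStochastic hP)]
    _ ≤ ∑ b, P a b * |y a| :=
      sum_le_sum fun b _ => mul_le_mul_of_nonneg_left (ha b) (nonneg_of_mem_rowStochastic hP)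
    _ = 1 * |y a| := by rw [← sum_mul, sum_row_of_mem_rowStochastic hP]

variable {P : Matrix (Fin n) (Fin n) ℝ}

theorem exists_eq_const_of_mulVec_eq_self (hP : P ∈ rowStochastic ℝ (Fin n))
    (hE : Connected fun a b => P a b ≠ 0) {y : Fin n → ℝ} (h : P *ᵥ y = y) :
    ∃ c, ∀ a, y a = c := by
  cases isEmpty_or_nonempty (Fin n)
  · exact ⟨0, isEmptyElim⟩
  obtain ⟨a₀, ha₀⟩ := Finite.exists_max y
  refine ⟨y a₀, hE.forall_of_adj_imp (fun a b hab ha => ?_) rfl⟩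
  exact eq_of_mulVec_apply_eq_of_forall_le hP ha₀ (by rw [h, ha]) hab

theorem mulVec_ne_neg (hP : P ∈ rowStochastic ℝ (Fin n)) (hE : Connected fun a b => P a b ≠ 0)
    (hbip : ¬ ∃ f : Fin n → Bool, ∀ a b, P a b ≠ 0 → f a ≠ f b) {y : Fin n → ℝ} (hy : y ≠ 0) :
    P *ᵥ y ≠ -y := by
  intro h
  obtain ⟨b, hb⟩ := Function.ne_iff.1 hy
  have : Nonempty (Fin n) := ⟨b⟩
  obtain ⟨a₀, ha₀⟩ := Finite.exists_max fun a => |y a|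
  set M := |y a₀|
  have hM : 0 < M := (abs_pos.2 hb).trans_le (ha₀ b)
  -- a row average of `-y a • y` reaches its bound `M * M`, so `y` flips sign along each edge
  have hflip : ∀ a b, P a b ≠ 0 → |y a| = M → y b = -y a := by
    intro a b hab ha
    have hsq : y a * y a = M * M := by rw [← ha, abs_mul_abs_self]
    have hz (c : Fin n) : ((-y a) • y) c ≤ M * M :=
      calc -y a * y c ≤ |y a * y c| := by rw [neg_mul]; exact neg_le_abs _
        _ = M * |y c| := by rw [abs_mul, ha]
        _ ≤ M * M := mul_le_mul_of_nonneg_left (ha₀ c) hM.le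
    have hb := eq_of_mulVec_apply_eq_of_forall_le hP hz
      (by rw [mulVec_smul, h, Pi.smul_apply, Pi.neg_apply, smul_eq_mul, neg_mul_neg, hsq]) hab
    have hya : y a ≠ 0 := fun h0 => hM.ne' (by rw [← ha, h0, abs_zero])
    refine mul_left_cancel₀ hya ?_
    simp only [Pi.smul_apply, smul_eq_mul] at hb
    linarith
  have hall : ∀ a, |y a| = M :=
    hE.forall_of_adj_imp (fun a b hab ha => by rw [hflip a b hab ha, abs_neg, ha]) rfl
  refine hbip ⟨fun a => decide (0 < y a), fun a b hab => ?_⟩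
  have hya : y a ≠ 0 := fun h0 => hM.ne' (by rw [← hall a, h0, abs_zero])
  simp only [hflip a b hab (hall a)]
  rcases hya.lt_or_gt with h | h <;> simp [h, h.not_gt]

theorem mem_Ioc_of_mulVec_eq_smul (hP : P ∈ rowStochastic ℝ (Fin n))
    (hE : Connected fun a b => P a b ≠ 0)
    (hbip : ¬ ∃ f : Fin n → Bool, ∀ a b, P a b ≠ 0 → f a ≠ f b) {y : Fin n → ℝ} (hy : y ≠ 0)
    {μ : ℝ} (h : P *ᵥ y = μ • y) : μ ∈ Set.Ioc (-1) 1 := by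
  obtain ⟨h₁, h₂⟩ := abs_le.1 (abs_le_one_of_mulVec_eq_smul hP hy h)
  refine ⟨h₁.lt_of_ne ?_, h₂⟩
  rintro rfl
  exact mulVec_ne_neg hP hE hbip hy (by rw [h, neg_one_smul])

end RowStochastic

theorem Matrix.mulVec_pow_eq_self {ι R : Type*} [Fintype ι] [DecidableEq ι] [Semiring R]
    {N : Matrix ι ι R} {v : ι → R} (hv : N *ᵥ v = v) (t : ℕ) : N ^ t *ᵥ v = v := by
  induction t with
  | zero => simp
  | succ t ih => rw [pow_succ, ← mulVec_mulVec, hv, ih]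

theorem Matrix.IsHermitian.exists_tendsto_pow {𝕜 ι : Type*} [RCLike 𝕜] [Fintype ι] [DecidableEq ι]
    {N : Matrix ι ι 𝕜} (hN : N.IsHermitian) (hev : ∀ k, hN.eigenvalues k ∈ Set.Ioc (-1) 1) :
    ∃ L, Tendsto (fun t : ℕ => N ^ t) atTop (𝓝 L) := by
  set U := hN.eigenvectorUnitary
  have hpow (t : ℕ) : N ^ t = U * diagonal (fun k => (hN.eigenvalues k : 𝕜) ^ t) * star U := by
    conv_lhs => rw [hN.spectral_theorem]
    rw [← map_pow, diagonal_pow, Unitary.conjStarAlgAut_apply]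
    rfl
  have hlim (k : ι) : ∃ g : ℝ, Tendsto (fun t : ℕ => hN.eigenvalues k ^ t) atTop (𝓝 g) := by
    obtain ⟨h₁, h₂⟩ := hev k
    rcases h₂.eq_or_lt with h | h
    · exact ⟨1, by simp [h]⟩
    · exact ⟨0, tendsto_pow_atTop_nhds_zero_of_abs_lt_one (abs_lt.2 ⟨h₁, h⟩)⟩
  choose g hg using hlim
  refine ⟨U * diagonal (fun k => (g k : 𝕜)) * star U, ?_⟩
  simp_rw [hpow]
  refine (tendsto_const_nhds.mul ((continuous_id.matrix_diagonal).tendsto _ |>.comp ?_)).mul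
    tendsto_const_nhds
  refine tendsto_pi_nhds.2 fun k => ?_
  have := ((RCLike.continuous_ofReal (K := 𝕜)).tendsto _).comp (hg k)
  simpa [Function.comp_def] using this

theorem Matrix.IsHermitian.tendsto_pow_of_fixed_eq_span {ι : Type*} [Fintype ι] [DecidableEq ι]
    {N : Matrix ι ι ℝ} (hN : N.IsHermitian)
    (hev : ∀ (μ : ℝ) (x : ι → ℝ), x ≠ 0 → N *ᵥ x = μ • x → μ ∈ Set.Ioc (-1) 1)
    {v : ι → ℝ} (hv : N *ᵥ v = v) (hfix : ∀ x, N *ᵥ x = x → ∃ c : ℝ, x = c • v) :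
    Tendsto (fun t : ℕ => N ^ t) atTop (𝓝 ((v ⬝ᵥ v)⁻¹ • vecMulVec v v)) := by
  obtain ⟨L, hL⟩ := hN.exists_tendsto_pow fun k =>
    hev _ _ (by simpa using hN.eigenvectorBasis.orthonormal.ne_zero k)
      (hN.mulVec_eigenvectorBasis k)
  have hNT : Nᵀ = N := (by simpa using hN : N.IsSymm)
  have hNL : N * L = L :=
    tendsto_nhds_unique (tendsto_const_nhds.mul hL)
      (by simpa only [Function.comp_def, pow_succ'] using hL.comp (tendsto_add_atTop_nat 1))
  have hLT : Lᵀ = L :=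
    tendsto_nhds_unique ((continuous_id.matrix_transpose.tendsto L).comp hL)
      (by simpa only [Function.comp_def, id, transpose_pow, hNT] using hL)
  have hLv : L *ᵥ v = v :=
    tendsto_nhds_unique ((continuous_id.matrix_mulVec continuous_const).tendsto L |>.comp hL)
      (by simp [Function.comp_def, mulVec_pow_eq_self hv])
  -- `L` is symmetric and `N * L = L`, so each row of `L` is fixed by `N`
  have hrow (a : ι) : ∃ c : ℝ, L a = c • v := by
    refine hfix _ ?_
    rw [← hLT]
    conv_rhs => rw [← hNL]
    rfl
  choose c hc using hrow
  have hc' (a : ι) : c a * (v ⬝ᵥ v) = v a := by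
    rw [← congrFun hLv a, mulVec, hc, smul_dotProduct, smul_eq_mul]
  convert hL using 2
  ext a b
  simp only [hc, smul_apply, Pi.smul_apply, vecMulVec_apply, smul_eq_mul, ← hc' a]
  rcases eq_or_ne (v ⬝ᵥ v) 0 with h | h
  · simp [dotProduct_self_eq_zero.1 h]
  · field_simp

noncomputable def sqrtDegree (w : Fin n → Fin n → ℝ) (a : Fin n) : ℝ :=
  √(∑ k, w a k)

noncomputable def normalizedAdjacency (w : Fin n → Fin n → ℝ) : Matrix (Fin n) (Fin n) ℝ :=
  Matrix.of fun a b => w a b / (sqrtDegree w a * sqrtDegree w b)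

section RandomWalk

variable {w : Fin n → Fin n → ℝ}

theorem transitionMatrix_mem_rowStochastic (hw : ∀ a b, 0 ≤ w a b) (hd : ∀ a, 0 < ∑ k, w a k) :
    transitionMatrix w ∈ rowStochastic ℝ (Fin n) :=
  mem_rowStochastic_iff_sum.2 ⟨fun a b => div_nonneg (hw a b) (hd a).le,
    fun a => by simp [transitionMatrix, ← sum_div, (hd a).ne']⟩

theorem transitionMatrix_apply_ne_zero_iff (hd : ∀ a, 0 < ∑ k, w a k) {a b : Fin n} :
    transitionMatrix w a b ≠ 0 ↔ w a b ≠ 0 := by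
  simp [transitionMatrix, (hd a).ne']

theorem sqrtDegree_pos (hd : ∀ a, 0 < ∑ k, w a k) (a : Fin n) : 0 < sqrtDegree w a :=
  Real.sqrt_pos.2 (hd a)

theorem sqrtDegree_mul_self (hd : ∀ a, 0 < ∑ k, w a k) (a : Fin n) :
    sqrtDegree w a * sqrtDegree w a = ∑ k, w a k :=
  Real.mul_self_sqrt (hd a).le

theorem normalizedAdjacency_isHermitian (hw : ∀ a b, w a b = w b a) :
    (normalizedAdjacency w).IsHermitian := by
  ext a b
  simp [normalizedAdjacency, hw a b, mul_comm]

theorem diagonal_mul_normalizedAdjacency (hd : ∀ a, 0 < ∑ k, w a k) :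
    diagonal (sqrtDegree w)⁻¹ * normalizedAdjacency w =
      transitionMatrix w * diagonal (sqrtDegree w)⁻¹ := by
  ext a b
  have := (sqrtDegree_pos hd a).ne'
  have := (sqrtDegree_pos hd b).ne'
  simp only [diagonal_mul, mul_diagonal, normalizedAdjacency, transitionMatrix, of_apply,
    Pi.inv_apply, ← sqrtDegree_mul_self hd a]
  field_simp

theorem transitionMatrix_pow_apply (hd : ∀ a, 0 < ∑ k, w a k) (t : ℕ) (a b : Fin n) :
    (transitionMatrix w ^ t) a b =
      sqrtDegree w b / sqrtDegree w a * (normalizedAdjacency w ^ t) a b := by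
  have h := congrFun₂ (SemiconjBy.pow_right (diagonal_mul_normalizedAdjacency hd) t).eq a b
  simp only [diagonal_mul, mul_diagonal, Pi.inv_apply] at h
  have := (sqrtDegree_pos hd a).ne'
  have := (sqrtDegree_pos hd b).ne'
  field_simp at h ⊢
  exact h.symm

theorem transitionMatrix_mulVec_eq_smul (hd : ∀ a, 0 < ∑ k, w a k) {x : Fin n → ℝ} {μ : ℝ}
    (h : normalizedAdjacency w *ᵥ x = μ • x) :
    transitionMatrix w *ᵥ (diagonal (sqrtDegree w)⁻¹ *ᵥ x) =
      μ • (diagonal (sqrtDegree w)⁻¹ *ᵥ x) := by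
  rw [mulVec_mulVec, ← diagonal_mul_normalizedAdjacency hd, ← mulVec_mulVec, h, mulVec_smul]

theorem normalizedAdjacency_mulVec_sqrtDegree (hd : ∀ a, 0 < ∑ k, w a k) :
    normalizedAdjacency w *ᵥ sqrtDegree w = sqrtDegree w := by
  ext a
  have := (sqrtDegree_pos hd a).ne'
  calc (normalizedAdjacency w *ᵥ sqrtDegree w) a = (∑ b, w a b) / sqrtDegree w a := by
        simp only [mulVec, dotProduct, normalizedAdjacency, of_apply, sum_div]
        refine sum_congr rfl fun b _ => ?_
        have := (sqrtDegree_pos hd b).ne'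
        field_simp
    _ = sqrtDegree w a := by rw [← sqrtDegree_mul_self hd a]; field_simp

theorem diagonal_inv_sqrtDegree_mulVec_ne_zero (hd : ∀ a, 0 < ∑ k, w a k) {x : Fin n → ℝ}
    (hx : x ≠ 0) : diagonal (sqrtDegree w)⁻¹ *ᵥ x ≠ 0 := by
  obtain ⟨a, ha⟩ := Function.ne_iff.1 hx
  refine Function.ne_iff.2 ⟨a, ?_⟩
  simpa [mulVec_diagonal, (sqrtDegree_pos hd a).ne'] using ha

theorem normalizedAdjacency_eigenvalue_mem_Ioc (hw_nonneg : ∀ a b, 0 ≤ w a b)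
    (hd : ∀ a, 0 < ∑ k, w a k) (hconn : Connected fun a b => w a b ≠ 0)
    (hbip : ¬ ∃ f : Fin n → Bool, ∀ a b, w a b ≠ 0 → f a ≠ f b) (μ : ℝ) (x : Fin n → ℝ)
    (hx : x ≠ 0) (h : normalizedAdjacency w *ᵥ x = μ • x) : μ ∈ Set.Ioc (-1) 1 := by
  simp_rw [← transitionMatrix_apply_ne_zero_iff hd] at hconn hbip
  exact mem_Ioc_of_mulVec_eq_smul (transitionMatrix_mem_rowStochastic hw_nonneg hd) hconn hbip
    (diagonal_inv_sqrtDegree_mulVec_ne_zero hd hx) (transitionMatrix_mulVec_eq_smul hd h)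

theorem exists_eq_smul_sqrtDegree_of_normalizedAdjacency_mulVec_eq_self
    (hw_nonneg : ∀ a b, 0 ≤ w a b) (hd : ∀ a, 0 < ∑ k, w a k)
    (hconn : Connected fun a b => w a b ≠ 0) {x : Fin n → ℝ}
    (h : normalizedAdjacency w *ᵥ x = x) : ∃ c : ℝ, x = c • sqrtDegree w := by
  simp_rw [← transitionMatrix_apply_ne_zero_iff hd] at hconn
  obtain ⟨c, hc⟩ := exists_eq_const_of_mulVec_eq_self
    (transitionMatrix_mem_rowStochastic hw_nonneg hd) hconn (y := diagonal (sqrtDegree w)⁻¹ *ᵥ x)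
    (by simpa only [one_smul] using transitionMatrix_mulVec_eq_smul hd (μ := 1) (by rwa [one_smul]))
  refine ⟨c, funext fun a => ?_⟩
  have hca := hc a
  simp only [mulVec_diagonal, Pi.inv_apply] at hca
  have := (sqrtDegree_pos hd a).ne'
  rw [Pi.smul_apply, smul_eq_mul, ← hca]
  field_simp

theorem tendsto_transitionMatrix_pow_apply (hw_symm : ∀ a b, w a b = w b a)
    (hw_nonneg : ∀ a b, 0 ≤ w a b) (hd : ∀ a, 0 < ∑ k, w a k)
    (hconn : Connected fun a b => w a b ≠ 0)
    (hbip : ¬ ∃ f : Fin n → Bool, ∀ a b, w a b ≠ 0 → f a ≠ f b) (a b : Fin n) :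
    Tendsto (fun t : ℕ => (transitionMatrix w ^ t) a b) atTop
      (𝓝 ((∑ k, w b k) / ∑ j, ∑ k, w j k)) := by
  have hlim := (normalizedAdjacency_isHermitian hw_symm).tendsto_pow_of_fixed_eq_span
    (normalizedAdjacency_eigenvalue_mem_Ioc hw_nonneg hd hconn hbip)
    (normalizedAdjacency_mulVec_sqrtDegree hd)
    (fun _ => exists_eq_smul_sqrtDegree_of_normalizedAdjacency_mulVec_eq_self hw_nonneg hd hconn)
  simp_rw [transitionMatrix_pow_apply hd]
  convert (tendsto_pi_nhds.1 (tendsto_pi_nhds.1 hlim a) b).const_mul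
    (sqrtDegree w b / sqrtDegree w a) using 2
  have hdot : sqrtDegree w ⬝ᵥ sqrtDegree w = ∑ j, ∑ k, w j k := by
    simp [dotProduct, sqrtDegree_mul_self hd]
  have := (sqrtDegree_pos hd a).ne'
  rw [Matrix.smul_apply, vecMulVec_apply, hdot, smul_eq_mul, ← sqrtDegree_mul_self hd b]
  field_simp

end RandomWalk

theorem stmt14_general [NeZero n] (w : Fin n → Fin n → ℝ)
    (R : Fin n → Fin n → Matrix (Fin nd) (Fin nd) ℝ)
    (σ : Fin n → Fin m) (S : Fin m → Fin m → Matrix (Fin nd) (Fin nd) ℝ)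
    (hw_symm : ∀ i j, w i j = w j i) (hw_nonneg : ∀ i j, 0 ≤ w i j)
    (hd : ∀ i, 0 < ∑ j, w i j)
    (hconn : Connected (fun i j => w i j ≠ 0))
    (hnonbip : ¬ ∃ f : Fin n → Bool, ∀ i j, w i j ≠ 0 → f i ≠ f j)
    (hS : ∀ i j q, IsPathFrom (fun i j => w i j ≠ 0) i j q →
      S (σ i) (σ j) = pathTransform R q)
    (y0 : Fin n × Fin nd → ℝ) :
    Filter.Tendsto
      (fun t : ℕ => Matrix.vecMul y0 ((supraP w R) ^ t))
      Filter.atTop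
      (nhds (fun q : Fin n × Fin nd =>
        (∑ a, (∑ i, ∑ c, y0 (i, c) * S (σ i) (σ 0) c a) * S (σ 0) (σ q.1) a q.2)
          * (∑ k, w q.1 k) / (∑ j, ∑ k, w j k))) := by
  have hT : IsPathTransform (fun i j => w i j ≠ 0) R fun i j => S (σ i) (σ j) := hS
  have hpow (t : ℕ) :
      supraP w R ^ t = supra fun i j => (transitionMatrix w ^ t) i j • S (σ i) (σ j) := by
    rw [supraP_eq_supra hT, supra_smul_pow hT.apply_self (hT.apply_mul_apply hconn)]
  refine tendsto_pi_nhds.2 fun ⟨j, b⟩ => ?_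
  simp only [hpow, vecMul_supra_smul_apply]
  convert tendsto_finsetSum univ fun i _ =>
    (tendsto_transitionMatrix_pow_apply hw_symm hw_nonneg hd hconn hnonbip i j).mul_const
      (((fun c => y0 (i, c)) ᵥ* S (σ i) (σ j)) b) using 2
  have hsplit (i : Fin n) : (fun c => y0 (i, c)) ᵥ* S (σ i) (σ j) =
      ((fun c => y0 (i, c)) ᵥ* S (σ i) (σ 0)) ᵥ* S (σ 0) (σ j) := by
    rw [vecMul_vecMul, hT.apply_mul_apply hconn]
  rw [← Finset.mul_sum, div_mul_eq_mul_div, mul_comm (∑ k, w j k)]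
  congr 2
  rw [Finset.sum_congr rfl fun i _ => congrFun (hsplit i) b]
  simp only [vecMul, dotProduct, Finset.sum_mul]
  exact Finset.sum_comm

/-- on a connected, coherent, non-bipartite network, the random
walk iteration `y(t+1)ᵀ = y(t)ᵀ𝒫` converges to the steady state
`y_j*ᵀ = ȳ(0)ᵀ S_{1σ(j)} d_j/(2m)`, with `ȳ(0)ᵀ = Σ_i y_i(0)ᵀ S_{σ(i)1}` and
`2m = Σ_j d_j`. -/
theorem stmt14 [NeZero n] (w : Fin n → Fin n → ℝ)
    (R : Fin n → Fin n → Matrix (Fin nd) (Fin nd) ℝ)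
    (σ : Fin n → Fin m) (S : Fin m → Fin m → Matrix (Fin nd) (Fin nd) ℝ)
    (hw_symm : ∀ i j, w i j = w j i) (hw_nonneg : ∀ i j, 0 ≤ w i j)
    (hloop : ∀ i, w i i = 0)
    (hrec : ∀ i j, R i j = (R j i)ᵀ)
    (hd : ∀ i, 0 < ∑ j, w i j)
    (hcoh : Coherent (fun i j => w i j ≠ 0) R)
    (hconn : Connected (fun i j => w i j ≠ 0))
    (hnonbip : ¬ ∃ f : Fin n → Bool, ∀ i j, w i j ≠ 0 → f i ≠ f j)
    (hS : ∀ i j q, IsPathFrom (fun i j => w i j ≠ 0) i j q →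
      S (σ i) (σ j) = pathTransform R q)
    (y0 : Fin n × Fin nd → ℝ) :
    Filter.Tendsto
      (fun t : ℕ => Matrix.vecMul y0 ((supraP w R) ^ t))
      Filter.atTop
      (nhds (fun q : Fin n × Fin nd =>
        (∑ a, (∑ i, ∑ c, y0 (i, c) * S (σ i) (σ 0) c a) * S (σ 0) (σ q.1) a q.2)
          * (∑ k, w q.1 k) / (∑ j, ∑ k, w j k))) :=
  stmt14_general w R σ S hw_symm hw_nonneg hd hconn hnonbip hS y0
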